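/- Let M/E be a finite Galois extension with nilpotent Galois group, R an intermediate field, and for each prime p dividing [R:E] let R_p = R ∩ M_p where M_p is the maximal p-extension of E in M. Then N(R/E) = ⋂_p N(R_p/E), and E*/N(R/E) is isomorphic to the direct product of the groups E*/N(R_p/E). -/

import Mathlib

/-!
Write `n = [R : E]`. Since `Gal(M/E)` is nilpotent it has a normal `p`-complement `K`, and the
fixed field of `Gal(M/R) ⊔ K` is a subfield of `R` of degree `p ^ v_p(n)`; being a `p`-extension
it lies in `M_p`, so `[R_p : E]` is exactly the `p`-part of `n`. The norm groups then satisfy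
`N(R) ≤ N(R_p)`, `E* ^ [R_p : E] ≤ N(R_p)`, `N(R_p) ^ (n / [R_p : E]) ≤ N(R)` and `E* ^ n ≤ N(R)`,
and for pairwise coprime exponents these relations alone force `N(R) = ⋂ N(R_p)` and, by the
Chinese remainder theorem for the integer exponents, `E*/⋂ N(R_p) ≅ ∏ E*/N(R_p)`.
-/

/-- The norm group `N(L/E)`: the image of the norm map `L* → E*`, as a subgroup of `Eˣ`. -/
noncomputable def normGroup (E L : Type*) [Field E] [Field L] [Algebra E L] : Subgroup Eˣ :=
  (Units.map (Algebra.norm E : L →* E)).range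

open Finset Function Module Nat IntermediateField

theorem Nat.prod_primeFactors_ordProj {n : ℕ} (hn : n ≠ 0) :
    ∏ p ∈ n.primeFactors, ordProj[p] n = n := by
  rw [← Nat.support_factorization]
  exact Nat.prod_factorization_pow_eq_self hn

theorem Int.exists_dvd_sub_one_and_prod_erase_dvd {ι : Type*} [Fintype ι] [DecidableEq ι]
    {n : ι → ℤ} (hn : Pairwise (IsCoprime on n)) :
    ∃ e : ι → ℤ, (∀ i, n i ∣ e i - 1) ∧ (∀ i, ∏ j ∈ univ.erase i, n j ∣ e i) ∧
      ∏ i, n i ∣ ∑ i, e i - 1 := by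
  have hcop : ∀ i, IsCoprime (n i) (∏ j ∈ univ.erase i, n j) := fun i =>
    IsCoprime.prod_right fun j hj => hn (ne_of_mem_erase hj).symm
  choose a b hab using fun i => hcop i
  refine ⟨fun i => b i * ∏ j ∈ univ.erase i, n j, fun i => ⟨-a i, by linear_combination hab i⟩,
    fun i => dvd_mul_left _ _, ?_⟩
  refine prod_dvd_of_coprime (hn.set_pairwise _) fun j _ => ?_
  rw [← add_sum_erase _ _ (mem_univ j), add_sub_right_comm]
  refine dvd_add ⟨-a j, by linear_combination hab j⟩ (dvd_sum fun i hi => ?_)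
  exact (dvd_prod_of_mem n (mem_erase.2 ⟨(ne_of_mem_erase hi).symm, mem_univ j⟩)).mul_left _

theorem Subgroup.zpow_mem_of_dvd {G : Type*} [Group G] {H : Subgroup G} {n : ℕ}
    (hH : ∀ x : G, x ^ n ∈ H) {k : ℤ} (hk : (n : ℤ) ∣ k) (x : G) : x ^ k ∈ H := by
  obtain ⟨m, rfl⟩ := hk
  rw [zpow_mul, zpow_natCast]
  exact H.zpow_mem (hH x) m

theorem QuotientGroup.ker_pi_mk' {G ι : Type*} [Group G] (N' : ι → Subgroup G)
    [∀ i, (N' i).Normal] : (MonoidHom.pi fun i => mk' (N' i)).ker = ⨅ i, N' i := by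
  ext x
  simp only [MonoidHom.mem_ker, Subgroup.mem_iInf, funext_iff, MonoidHom.pi_apply,
    QuotientGroup.mk'_apply, Pi.one_apply, QuotientGroup.eq_one_iff]

section CommGroup

variable {A : Type*} [CommGroup A]

theorem Finset.prod_zpow_eq_zpow_sum {ι : Type*} (s : Finset ι) (f : ι → ℤ) (x : A) :
    ∏ i ∈ s, x ^ f i = x ^ ∑ i ∈ s, f i := by
  induction s using Finset.cons_induction with
  | empty => simp
  | cons i s hi ih => rw [prod_cons, sum_cons, ih, zpow_add]

variable {ι : Type*} [Fintype ι] [DecidableEq ι] {n : ι → ℕ}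

theorem Subgroup.eq_iInf_of_pow_mem (hn : Pairwise (Nat.Coprime on n)) {N : Subgroup A}
    {N' : ι → Subgroup A} (hle : ∀ i, N ≤ N' i) (hN : ∀ x : A, x ^ ∏ i, n i ∈ N)
    (hN' : ∀ i, ∀ x ∈ N' i, x ^ ∏ j ∈ univ.erase i, n j ∈ N) :
    N = ⨅ i, N' i := by
  refine le_antisymm (le_iInf hle) fun x hx => ?_
  obtain ⟨e, -, he, hsum⟩ := Int.exists_dvd_sub_one_and_prod_erase_dvd
    (n := fun i => (n i : ℤ)) fun i j hij => Nat.isCoprime_iff_coprime.2 (hn hij)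
  have hpow : ∀ i, x ^ e i ∈ N := by
    intro i
    obtain ⟨m, hm⟩ := he i
    rw [hm, zpow_mul, ← Nat.cast_prod, zpow_natCast]
    exact N.zpow_mem (hN' i x (Subgroup.mem_iInf.1 hx i)) m
  have hx : x = (∏ i, x ^ e i) / x ^ (∑ i, e i - 1) := by
    rw [prod_zpow_eq_zpow_sum, div_eq_mul_inv, ← zpow_sub, sub_sub_cancel, zpow_one]
  rw [hx]
  exact div_mem (prod_mem fun i _ => hpow i) (zpow_mem_of_dvd hN (by exact_mod_cast hsum) x)

namespace QuotientGroup

theorem pi_mk'_surjective (hn : Pairwise (Nat.Coprime on n)) {N' : ι → Subgroup A}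
    (hN' : ∀ i, ∀ x : A, x ^ n i ∈ N' i) :
    Surjective (MonoidHom.pi fun i => mk' (N' i)) := by
  intro f
  choose x hx using fun i => mk_surjective (f i)
  obtain ⟨e, he₁, he, -⟩ := Int.exists_dvd_sub_one_and_prod_erase_dvd
    (n := fun i => (n i : ℤ)) fun i j hij => Nat.isCoprime_iff_coprime.2 (hn hij)
  refine ⟨∏ i, x i ^ e i, funext fun j => ?_⟩
  rw [MonoidHom.pi_apply, mk'_apply, ← hx j, QuotientGroup.eq_iff_div_mem,
    ← mul_prod_erase univ _ (mem_univ j), mul_div_right_comm, div_eq_mul_inv, ← zpow_sub_one]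
  refine mul_mem (Subgroup.zpow_mem_of_dvd (hN' j) (he₁ j) _) (prod_mem fun i hi => ?_)
  refine Subgroup.zpow_mem_of_dvd (hN' j) (dvd_trans ?_ (he i)) _
  exact dvd_prod_of_mem (fun j => (n j : ℤ)) (mem_erase.2 ⟨(ne_of_mem_erase hi).symm, mem_univ j⟩)

noncomputable def quotientiInfMulEquivPi (hn : Pairwise (Nat.Coprime on n))
    {N' : ι → Subgroup A} (hN' : ∀ i, ∀ x : A, x ^ n i ∈ N' i) :
    A ⧸ (⨅ i, N' i) ≃* ((i : ι) → A ⧸ N' i) :=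
  (quotientMulEquivOfEq (ker_pi_mk' N').symm).trans
    (quotientKerEquivOfSurjective _ (pi_mk'_surjective hn hN'))

end QuotientGroup

end CommGroup

namespace Subgroup

variable {G : Type*} [Group G]

theorem relIndex_sup_normal_right (H K : Subgroup G) [K.Normal] (hK : K.relIndex H ≠ 0) :
    H.relIndex (H ⊔ K) = H.relIndex K := by
  have h₁ := relIndex_inf_mul_relIndex H K (H ⊔ K)
  have h₂ := relIndex_inf_mul_relIndex K H (H ⊔ K)
  rw [inf_of_le_left le_sup_right, relIndex_sup_right] at h₁
  rw [inf_sup_self, inf_comm, ← h₁, mul_comm] at h₂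
  exact Nat.eq_of_mul_eq_mul_right (Nat.pos_of_ne_zero hK) h₂

theorem index_sup_eq_ordProj [Finite G] {p a : ℕ} (hp : p.Prime) {K : Subgroup G} [K.Normal]
    (hK : ¬ p ∣ Nat.card K) (hKi : K.index = p ^ a) (H : Subgroup G) :
    (H ⊔ K).index = ordProj[p] H.index := by
  have hfin : ∀ H₁ H₂ : Subgroup G, H₁.relIndex H₂ ≠ 0 := fun H₁ H₂ =>
    (H₁.subgroupOf H₂).index_ne_zero_of_finite
  obtain ⟨b, -, hb⟩ := (Nat.dvd_prime_pow hp).1 (hKi ▸ index_dvd_of_le (le_sup_right : K ≤ H ⊔ K))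
  have hrel : ¬ p ∣ H.relIndex (H ⊔ K) := by
    rw [relIndex_sup_normal_right H K (hfin K H)]
    exact fun h => hK (h.trans (relIndex_dvd_card H K))
  rw [← relIndex_mul_index (le_sup_left : H ≤ H ⊔ K), hb,
    Nat.factorization_mul (hfin H _) (pow_ne_zero _ hp.ne_zero)]
  simp [Nat.factorization_eq_zero_of_not_dvd hrel, hp.factorization_pow]

end Subgroup

namespace Group.IsNilpotent

variable {G : Type*} [Group G] [Finite G]

theorem exists_normal_complement (hG : Group.IsNilpotent G) {p : ℕ} (hp : p.Prime) :
    ∃ K : Subgroup G, K.Normal ∧ ¬ p ∣ Nat.card K ∧ K.index = ordProj[p] (Nat.card G) := by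
  by_cases hpG : p ∣ Nat.card G
  swap
  · exact ⟨⊤, inferInstance, by rwa [Subgroup.card_top],
      by simp [Nat.factorization_eq_zero_of_not_dvd hpG]⟩
  have : Fact p.Prime := ⟨hp⟩
  obtain ⟨e⟩ := (Group.isNilpotent_of_finite_tfae.out 0 4).1 hG
  have hsyl := (Group.isNilpotent_of_finite_tfae.out 0 3).1 hG
  let _ : Unique (Sylow p G) := Sylow.unique_of_normal default (hsyl p ⟨hp⟩ default)
  let P : (Nat.card G).primeFactors := ⟨p, Nat.mem_primeFactors.2 ⟨hp, hpG, Nat.card_pos.ne'⟩⟩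
  -- the projection of `G ≅ ∏ q, ∏ (Q : Sylow q G), Q` onto its Sylow `p`-factor
  let ψ := (Pi.evalMonoidHom _ P).comp e.symm.toMonoidHom
  have hψ : Function.Surjective ψ := fun y => ⟨e (Pi.mulSingle P y), by simp [ψ]⟩
  have hindex : ψ.ker.index = ordProj[p] (Nat.card G) := by
    rw [Subgroup.index, Nat.card_congr (QuotientGroup.quotientKerEquivOfSurjective ψ hψ).toEquiv,
      Nat.card_congr (Equiv.piUnique _)]
    exact Sylow.card_eq_multiplicity _
  refine ⟨ψ.ker, inferInstance, ?_, hindex⟩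
  have hcard : Nat.card ψ.ker * ordProj[p] (Nat.card G) = Nat.card G :=
    hindex ▸ ψ.ker.card_mul_index
  rw [Nat.eq_div_of_mul_eq_left (ordProj_pos _ p).ne' hcard]
  exact Nat.not_dvd_ordCompl hp Nat.card_pos.ne'

theorem exists_le_index_eq_ordProj (hG : Group.IsNilpotent G) {p : ℕ} (hp : p.Prime)
    (H : Subgroup G) : ∃ H' : Subgroup G, H ≤ H' ∧ H'.index = ordProj[p] H.index := by
  obtain ⟨K, hK, hpK, hKi⟩ := hG.exists_normal_complement hp
  exact ⟨H ⊔ K, le_sup_left, Subgroup.index_sup_eq_ordProj hp hpK hKi H⟩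

end Group.IsNilpotent

section Tower

variable {E K L : Type*} [Field E] [Field K] [Field L] [Algebra E K] [Algebra K L] [Algebra E L]
  [IsScalarTower E K L]

theorem pow_finrank_mem_normGroup (u : Eˣ) : u ^ finrank E K ∈ normGroup E K :=
  ⟨Units.map (algebraMap E K : E →* K) u, Units.ext (Algebra.norm_algebraMap (u : E))⟩

variable (K) in
theorem normGroup_le_of_isScalarTower : normGroup E L ≤ normGroup E K := by
  rintro _ ⟨w, rfl⟩
  exact ⟨Units.map (Algebra.norm K : L →* K) w, Units.ext Algebra.norm_norm⟩

theorem pow_finrank_mem_normGroup_of_mem {u : Eˣ} (hu : u ∈ normGroup E K) :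
    u ^ finrank K L ∈ normGroup E L := by
  obtain ⟨v, rfl⟩ := hu
  refine ⟨Units.map (algebraMap K L : K →* L) v, Units.ext ?_⟩
  simp [← Algebra.norm_norm (R := E) (S := K) (A := L), Algebra.norm_algebraMap]

end Tower

namespace IntermediateField

variable {E M : Type*} [Field E] [Field M] [Algebra E M] {K L : IntermediateField E M}

theorem normGroup_le_of_le (h : K ≤ L) : normGroup E L ≤ normGroup E K :=
  letI := (inclusion h).toAlgebra
  haveI : IsScalarTower E K L := IsScalarTower.of_algebraMap_eq' rfl
  normGroup_le_of_isScalarTower K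

theorem pow_mem_normGroup_of_le (h : K ≤ L) {u : Eˣ} (hu : u ∈ normGroup E K) :
    u ^ (finrank E L / finrank E K) ∈ normGroup E L := by
  let _ := (inclusion h).toAlgebra
  have : IsScalarTower E K L := IsScalarTower.of_algebraMap_eq' rfl
  rcases (finrank E K).eq_zero_or_pos with hK | hK
  · simp [hK]
  rw [← finrank_mul_finrank E K L, Nat.mul_div_cancel_left _ hK]
  exact pow_finrank_mem_normGroup_of_mem hu

end IntermediateField

theorem IntermediateField.finrank_inf_eq_ordProj {E M : Type*} [Field E] [Field M] [Algebra E M]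
    [FiniteDimensional E M] [IsGalois E M] (hnil : Group.IsNilpotent (M ≃ₐ[E] M))
    (R P : IntermediateField E M) {p : ℕ} (hp : p.Prime) (hP : ∃ k, finrank E P = p ^ k)
    (hPmax : ∀ K : IntermediateField E M, (∃ k, finrank E K = p ^ k) → K ≤ P) :
    finrank E ↥(R ⊓ P) = ordProj[p] (finrank E R) := by
  obtain ⟨H, hRH, hH⟩ := hnil.exists_le_index_eq_ordProj hp R.fixingSubgroup
  have hFR : fixedField H ≤ R := by
    simpa only [IsGalois.fixedField_fixingSubgroup] using fixedField_antitone hRH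
  have hF : finrank E (fixedField H) = ordProj[p] (finrank E R) := by
    rw [finrank_eq_fixingSubgroup_index, fixingSubgroup_fixedField, hH,
      finrank_eq_fixingSubgroup_index]
  have hFP : fixedField H ≤ P := hPmax _ ⟨_, hF⟩
  obtain ⟨k, hk⟩ := hP
  obtain ⟨j, -, hj⟩ := (Nat.dvd_prime_pow hp).1 (hk ▸ finrank_dvd_of_le_right inf_le_right)
  refine Nat.dvd_antisymm ?_ (hF ▸ finrank_dvd_of_le_right (le_inf hFR hFP))
  rw [hj, ← hp.pow_dvd_iff_dvd_ordProj finrank_pos.ne', ← hj]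
  exact finrank_dvd_of_le_right inf_le_left

theorem stmt_5 {E M : Type*} [Field E] [Field M] [Algebra E M] [FiniteDimensional E M]
    [IsGalois E M] (hnil : Group.IsNilpotent (M ≃ₐ[E] M))
    (R : IntermediateField E M)
    (Mp : ℕ → IntermediateField E M)
    -- `Mp p` is the maximal `p`-extension of `E` inside `M`:
    (hMpPow : ∀ p : ℕ, p.Prime → ∃ k : ℕ, Module.finrank E (Mp p) = p ^ k)
    (hMpMax : ∀ p : ℕ, p.Prime → ∀ K : IntermediateField E M,
      (∃ k : ℕ, Module.finrank E K = p ^ k) → K ≤ Mp p) :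
    normGroup E R = (⨅ p ∈ (Module.finrank E R).primeFactors, normGroup E ↥(R ⊓ Mp p)) ∧
      Nonempty ((Eˣ ⧸ normGroup E R) ≃*
        ((p : (Module.finrank E R).primeFactors) → Eˣ ⧸ normGroup E ↥(R ⊓ Mp p))) := by
  set n := finrank E R
  have hdeg (p : n.primeFactors) : finrank E ↥(R ⊓ Mp p) = ordProj[(p : ℕ)] n :=
    have hp := Nat.prime_of_mem_primeFactors p.2
    finrank_inf_eq_ordProj hnil R (Mp p) hp (hMpPow p hp) (hMpMax p hp)
  have hcop : Pairwise (Nat.Coprime on fun p : n.primeFactors => ordProj[(p : ℕ)] n) :=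
    fun p q hpq => Nat.Coprime.pow _ _ <| (Nat.coprime_primes (Nat.prime_of_mem_primeFactors p.2)
      (Nat.prime_of_mem_primeFactors q.2)).2 (Subtype.coe_injective.ne hpq)
  have hprod : ∏ p : n.primeFactors, ordProj[(p : ℕ)] n = n :=
    (prod_coe_sort _ fun p => ordProj[p] n).trans (prod_primeFactors_ordProj finrank_pos.ne')
  have hinf : normGroup E R = ⨅ p : n.primeFactors, normGroup E ↥(R ⊓ Mp p) := by
    refine Subgroup.eq_iInf_of_pow_mem hcop (fun p => normGroup_le_of_le inf_le_left)
      (fun u => by rw [hprod]; exact pow_finrank_mem_normGroup u) fun p u hu => ?_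
    have hdiv : n / ordProj[(p : ℕ)] n = ∏ q ∈ univ.erase p, ordProj[(q : ℕ)] n :=
      Nat.div_eq_of_eq_mul_left (ordProj_pos _ _)
        ((prod_erase_mul _ _ (mem_univ p)).trans hprod).symm
    rw [← hdiv, ← hdeg p]
    exact pow_mem_normGroup_of_le inf_le_left hu
  refine ⟨hinf.trans iInf_subtype, ⟨(QuotientGroup.quotientMulEquivOfEq hinf).trans
    (QuotientGroup.quotientiInfMulEquivPi hcop fun p u => ?_)⟩⟩
  simpa only [hdeg p] using pow_finrank_mem_normGroup (K := ↥(R ⊓ Mp p)) u
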